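/- Let H be a complex Hilbert space and let J be a bounded selfadjoint injective linear operator on H. Let (W_n) be a sequence of unitary operators on H converging in the strong operator topology to a unitary operator W. Suppose that for every n there exist bounded operators C_n and D_n on H with J∘C_n = W_n∘J and J∘D_n = W_n*∘J, and suppose that the sequences (C_n* C_n) and (D_n* D_n) both converge in the strong operator topology. Then there exists a (unique) bounded operator C on H with J∘C = W∘J, and C_n → C as well as C_n* → C* in the strong operator topology. -/

import Mathlib

/-!
From `J C_n = W_n J`, `J D_n = W_n* J` and injectivity of `J`, `C_n D_n = 1`, so
`C_n = D_n* (C_n* C_n)`. Strong convergence of `C_n* C_n` and `D_n* D_n` bounds `‖C_n‖` and `‖D_n‖`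
uniformly (Banach–Steinhaus and `‖A* A‖ = ‖A‖²`). On the range of `J`, which is dense since `J`
is self-adjoint and injective, `C_n* J = J W_n*` and `D_n* J = J W_n` converge, so the uniformly
bounded sequences `C_n*` and `D_n*` converge strongly everywhere. Hence `C_n = D_n* (C_n* C_n)`
converges strongly, its limit `C` satisfies `J C = W J`, and `C_n* → C*` because the strong limit
of `C_n*` is the adjoint of the strong limit of `C_n`.
-/

open Filter Topology ContinuousLinearMap

section Normed

variable {𝕜 E F G : Type*} [NontriviallyNormedField 𝕜] [NormedAddCommGroup E] [NormedSpace 𝕜 E]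
  [NormedAddCommGroup F] [NormedSpace 𝕜 F] [NormedAddCommGroup G] [NormedSpace 𝕜 G]

theorem isClosed_setOf_cauchySeq_apply {A : ℕ → E →L[𝕜] F} {K : ℝ} (hA : ∀ n, ‖A n‖ ≤ K) :
    IsClosed {x | CauchySeq fun n ↦ A n x} := by
  -- `(A n x)` is Cauchy iff `(A p.1 - A p.2) x → 0` along `p : ℕ × ℕ`, an equicontinuous family.
  have hbound : ∃ K', ∀ p : ℕ × ℕ, ‖A p.1 - A p.2‖ ≤ K' :=
    ⟨K + K, fun p ↦ (norm_sub_le _ _).trans (add_le_add (hA p.1) (hA p.2))⟩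
  have hequi : Equicontinuous fun p : ℕ × ℕ ↦ ⇑(A p.1 - A p.2) :=
    ((NormedSpace.equicontinuous_TFAE fun p : ℕ × ℕ ↦ A p.1 - A p.2).out 1 5).mpr hbound
  simp_rw [cauchySeq_iff_tendsto_dist_atTop_0, dist_eq_norm, ← tendsto_zero_iff_norm_tendsto_zero,
    ← sub_apply]
  exact hequi.isClosed_setOfPred_tendsto continuous_const

theorem exists_tendsto_apply_of_dense [CompleteSpace F] {A : ℕ → E →L[𝕜] F} {K : ℝ}
    (hA : ∀ n, ‖A n‖ ≤ K) {s : Set E} (hs : Dense s)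
    (h : ∀ z ∈ s, ∃ y, Tendsto (fun n ↦ A n z) atTop (𝓝 y)) (x : E) :
    ∃ y, Tendsto (fun n ↦ A n x) atTop (𝓝 y) := by
  have hs' : s ⊆ {x | CauchySeq fun n ↦ A n x} := fun z hz ↦
    let ⟨_, hy⟩ := h z hz; hy.cauchySeq
  exact cauchySeq_tendsto_of_complete <|
    (isClosed_setOf_cauchySeq_apply hA).closure_subset_iff.2 hs' (hs x)

theorem exists_tendsto_apply_of_comp_eq [CompleteSpace E] {A : ℕ → E →L[𝕜] E} {K : ℝ}
    (hA : ∀ n, ‖A n‖ ≤ K) {J : G →L[𝕜] E} (hJ : DenseRange J) {U : ℕ → G →L[𝕜] G}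
    (hAJ : ∀ n, A n ∘L J = J ∘L U n) (hU : ∀ x, ∃ y, Tendsto (fun n ↦ U n x) atTop (𝓝 y))
    (x : E) : ∃ y, Tendsto (fun n ↦ A n x) atTop (𝓝 y) := by
  refine exists_tendsto_apply_of_dense hA hJ (fun _ ⟨u, hu⟩ ↦ ?_) x
  obtain ⟨y, hy⟩ := hU u
  rw [← hu]
  exact ⟨J y, ((J.continuous.tendsto y).comp hy).congr fun n ↦
    (DFunLike.congr_fun (hAJ n) u).symm⟩

theorem exists_norm_le_of_tendsto_apply [CompleteSpace E] {A : ℕ → E →L[𝕜] F}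
    (h : ∀ x, ∃ y, Tendsto (fun n ↦ A n x) atTop (𝓝 y)) : ∃ K, ∀ n, ‖A n‖ ≤ K :=
  banach_steinhaus fun x ↦
    let ⟨_, hy⟩ := h x
    let ⟨K, hK⟩ := hy.norm.bddAbove_range
    ⟨K, fun n ↦ hK ⟨n, rfl⟩⟩

theorem exists_continuousLinearMap_tendsto_apply [CompleteSpace E] {A : ℕ → E →L[𝕜] F}
    (h : ∀ x, ∃ y, Tendsto (fun n ↦ A n x) atTop (𝓝 y)) :
    ∃ B : E →L[𝕜] F, ∀ x, Tendsto (fun n ↦ A n x) atTop (𝓝 (B x)) := by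
  choose f hf using h
  exact ⟨continuousLinearMapOfTendsto A (tendsto_pi_nhds.2 hf), hf⟩

theorem tendsto_apply_apply_of_tendsto [CompleteSpace E] {A : ℕ → E →L[𝕜] F} {f : E → F}
    (hA : ∀ x, Tendsto (fun n ↦ A n x) atTop (𝓝 (f x))) {u : ℕ → E} {x : E}
    (hu : Tendsto u atTop (𝓝 x)) : Tendsto (fun n ↦ A n (u n)) atTop (𝓝 (f x)) := by
  obtain ⟨K, hK⟩ := exists_norm_le_of_tendsto_apply fun x ↦ ⟨f x, hA x⟩
  have hsmall : Tendsto (fun n ↦ A n (u n - x)) atTop (𝓝 0) := by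
    refine squeeze_zero_norm (fun n ↦ ((A n).le_opNorm _).trans ?_)
      (by simpa using (tendsto_iff_norm_sub_tendsto_zero.1 hu).const_mul K)
    exact mul_le_mul_of_nonneg_right (hK n) (norm_nonneg _)
  simpa using hsmall.add (hA x)

theorem comp_eq_id_of_comp_eq {J A B U V : E →L[𝕜] E} (hJ : Function.Injective J)
    (hA : J ∘L A = U ∘L J) (hB : J ∘L B = V ∘L J) (hUV : U ∘L V = .id 𝕜 E) :
    A ∘L B = .id 𝕜 E := by
  ext x
  refine hJ ?_
  calc J (A (B x)) = U (J (B x)) := DFunLike.congr_fun hA (B x)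
    _ = U (V (J x)) := congrArg U (DFunLike.congr_fun hB x)
    _ = J x := DFunLike.congr_fun hUV (J x)

end Normed

section Hilbert

variable {𝕜 E : Type*} [RCLike 𝕜] [NormedAddCommGroup E] [InnerProductSpace 𝕜 E]
  [CompleteSpace E]

theorem exists_norm_le_of_tendsto_adjoint_comp_self {A : ℕ → E →L[𝕜] E}
    (h : ∀ x, ∃ y, Tendsto (fun n ↦ adjoint (A n) (A n x)) atTop (𝓝 y)) :
    ∃ K, ∀ n, ‖A n‖ ≤ K := by
  obtain ⟨K, hK⟩ := exists_norm_le_of_tendsto_apply (A := fun n ↦ adjoint (A n) ∘L A n) h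
  refine ⟨√K, fun n ↦ Real.le_sqrt_of_sq_le ?_⟩
  simpa [sq, norm_adjoint_comp_self] using hK n

theorem IsSelfAdjoint.denseRange_of_injective {J : E →L[𝕜] E} (hJ : IsSelfAdjoint J)
    (hinj : Function.Injective J) : DenseRange J := by
  have : J.rangeᗮ = ⊥ := by
    rw [orthogonal_range, hJ.adjoint_eq]
    exact LinearMap.ker_eq_bot.2 hinj
  rw [DenseRange, ← coe_coe, ← LinearMap.coe_range, Submodule.dense_iff_topologicalClosure_eq_top]
  exact Submodule.topologicalClosure_eq_top_iff.2 this

theorem adjoint_comp_eq_comp_adjoint_of_comp_eq {J A B : E →L[𝕜] E} (hJ : IsSelfAdjoint J)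
    (h : J ∘L A = B ∘L J) : adjoint A ∘L J = J ∘L adjoint B := by
  simpa only [adjoint_comp, hJ.adjoint_eq] using congrArg adjoint h

theorem apply_adjoint_apply_of_mem_unitary {U : E →L[𝕜] E} (hU : U ∈ unitary (E →L[𝕜] E))
    (x : E) : U (adjoint U x) = x := by
  simpa [star_eq_adjoint] using congr($(Unitary.mul_star_self_of_mem hU) x)

theorem tendsto_adjoint_apply_of_mem_unitary {U : ℕ → E →L[𝕜] E} {V : E →L[𝕜] E}
    (hU : ∀ n, U n ∈ unitary (E →L[𝕜] E)) (hV : V ∈ unitary (E →L[𝕜] E))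
    (h : ∀ x, Tendsto (fun n ↦ U n x) atTop (𝓝 (V x))) (x : E) :
    Tendsto (fun n ↦ adjoint (U n) x) atTop (𝓝 (adjoint V x)) := by
  have hdist : ∀ n, ‖adjoint (U n) x - adjoint V x‖ = ‖x - U n (adjoint V x)‖ := fun n ↦ by
    rw [← norm_map_of_mem_unitary (hU n), map_sub, apply_adjoint_apply_of_mem_unitary (hU n)]
  rw [tendsto_iff_norm_sub_tendsto_zero]
  simpa [hdist, apply_adjoint_apply_of_mem_unitary hV] using
    (tendsto_const_nhds (x := x)).sub (h (adjoint V x)) |>.norm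

theorem tendsto_adjoint_apply_of_tendsto {A : ℕ → E →L[𝕜] E} {B : E →L[𝕜] E}
    (hA : ∀ y, Tendsto (fun n ↦ A n y) atTop (𝓝 (B y))) {x b : E}
    (hb : Tendsto (fun n ↦ adjoint (A n) x) atTop (𝓝 b)) :
    Tendsto (fun n ↦ adjoint (A n) x) atTop (𝓝 (adjoint B x)) := by
  convert hb using 2
  refine ext_inner_right 𝕜 fun y ↦ tendsto_nhds_unique ?_ (hb.inner tendsto_const_nhds)
  simpa only [adjoint_inner_left] using tendsto_const_nhds.inner (hA y)

end Hilbert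

/-- Let `J` be a bounded selfadjoint injective operator on a complex Hilbert space `H`,
`(W_n)` unitaries converging strongly to a unitary `W`, and suppose there are bounded
operators `C_n, D_n` with `J C_n = W_n J`, `J D_n = W_n* J` such that `(C_n* C_n)` and
`(D_n* D_n)` converge strongly. Then there is a unique bounded `C` with `J C = W J`, and
`C_n → C`, `C_n* → C*` strongly. -/
theorem statement_16 {H : Type*} [NormedAddCommGroup H] [InnerProductSpace ℂ H]
    [CompleteSpace H] (J : H →L[ℂ] H) (hJsa : IsSelfAdjoint J)
    (hJinj : Function.Injective J)
    (W : ℕ → H →L[ℂ] H) (hWu : ∀ n, W n ∈ unitary (H →L[ℂ] H))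
    (Wlim : H →L[ℂ] H) (hWlimu : Wlim ∈ unitary (H →L[ℂ] H))
    (hWconv : ∀ x : H, Tendsto (fun n => W n x) atTop (nhds (Wlim x)))
    (C D : ℕ → H →L[ℂ] H)
    (hC : ∀ n, J.comp (C n) = (W n).comp J)
    (hD : ∀ n, J.comp (D n) = (star (W n)).comp J)
    (hCconv : ∀ x : H, ∃ y : H,
      Tendsto (fun n => ContinuousLinearMap.adjoint (C n) (C n x)) atTop (nhds y))
    (hDconv : ∀ x : H, ∃ y : H,
      Tendsto (fun n => ContinuousLinearMap.adjoint (D n) (D n x)) atTop (nhds y)) :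
    ∃ Clim : H →L[ℂ] H, J.comp Clim = Wlim.comp J ∧
      (∀ C' : H →L[ℂ] H, J.comp C' = Wlim.comp J → C' = Clim) ∧
      (∀ x : H, Tendsto (fun n => C n x) atTop (nhds (Clim x))) ∧
      (∀ x : H, Tendsto (fun n => ContinuousLinearMap.adjoint (C n) x) atTop
        (nhds (ContinuousLinearMap.adjoint Clim x))) := by
  obtain ⟨KC, hKC⟩ := exists_norm_le_of_tendsto_adjoint_comp_self hCconv
  obtain ⟨KD, hKD⟩ := exists_norm_le_of_tendsto_adjoint_comp_self hDconv
  have hJ : DenseRange J := hJsa.denseRange_of_injective hJinj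
  have hCadj : ∀ x, ∃ y, Tendsto (fun n ↦ adjoint (C n) x) atTop (𝓝 y) :=
    exists_tendsto_apply_of_comp_eq (fun n ↦ (adjoint.norm_map (C n)).trans_le (hKC n))
      hJ (fun n ↦ adjoint_comp_eq_comp_adjoint_of_comp_eq hJsa (hC n))
      fun x ↦ ⟨_, tendsto_adjoint_apply_of_mem_unitary hWu hWlimu hWconv x⟩
  have hDadj : ∀ x, ∃ y, Tendsto (fun n ↦ adjoint (D n) x) atTop (𝓝 y) := by
    refine exists_tendsto_apply_of_comp_eq
      (fun n ↦ (adjoint.norm_map (D n)).trans_le (hKD n)) hJ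
      (fun n ↦ ?_) fun x ↦ ⟨_, hWconv x⟩
    simpa only [star_eq_adjoint, adjoint_adjoint] using
      adjoint_comp_eq_comp_adjoint_of_comp_eq hJsa (hD n)
  choose R hR using hDadj
  choose P hP using hCconv
  -- `C n ∘ D n = id`, so `adjoint (D n) ∘ adjoint (C n) = id`
  have hCfactor : ∀ n x, C n x = adjoint (D n) (adjoint (C n) (C n x)) := fun n x ↦ by
    have hCD := comp_eq_id_of_comp_eq hJinj (hC n) (hD n) (Unitary.mul_star_self_of_mem (hWu n))
    simpa [adjoint_comp, adjoint_id] using (DFunLike.congr_fun (congrArg adjoint hCD) (C n x)).symm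
  obtain ⟨Clim, hClim⟩ := exists_continuousLinearMap_tendsto_apply fun x ↦
    ⟨R (P x), by simpa only [← hCfactor] using tendsto_apply_apply_of_tendsto hR (hP x)⟩
  have hJClim : J ∘L Clim = Wlim ∘L J := ext fun x ↦
    tendsto_nhds_unique ((J.continuous.tendsto _).comp (hClim x))
      ((hWconv (J x)).congr fun n ↦ (DFunLike.congr_fun (hC n) x).symm)
  refine ⟨Clim, hJClim, fun C' hC' ↦ ext fun x ↦ hJinj ?_, hClim, fun x ↦ ?_⟩
  · exact (DFunLike.congr_fun hC' x).trans (DFunLike.congr_fun hJClim x).symm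
  · obtain ⟨b, hb⟩ := hCadj x
    exact tendsto_adjoint_apply_of_tendsto hClim hb
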